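/- Let α > 1, c ∈ ℝ, and f ∈ 𝒮(ℝ²) with (∂^k f/∂x^k)(c,y)=0 for k=0,…,m where m ≥ α - 2. Define Q_α f(s,u) = ∫_ℝ f(x+c, s x|x|^{α-1}+u) dx and let X F_α denote the X-ray transform of F_α(ξ,η) = f(sgn(ξ)|ξ|^{1/α}+c,η)/(α|ξ|^{(α-1)/α}). Then Q_α f(s,u) = (1/√(1+s²)) · X F_α(arccot(-s), u/√(1+s²)) for all s, u ∈ ℝ. -/

import Mathlib

open MeasureTheory

/-- The X-ray transform of `g` over the line `θ, t`. -/
noncomputable def xray (g : ℝ → ℝ → ℝ) (θ t : ℝ) : ℝ :=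
  ∫ σ : ℝ, g (t * Real.cos θ - σ * Real.sin θ) (t * Real.sin θ + σ * Real.cos θ)

/-- `arccot (-s)`, taking values in `(0, π)`. -/
noncomputable def arccotNeg (s : ℝ) : ℝ := Real.pi / 2 + Real.arctan s

/-! The substitution `ξ = x |x|^(α-1) = sign x · |x|^α` is a `C¹` bijection of `ℝ` with Jacobian
`α |x|^(α-1)` and inverse `ξ ↦ sign ξ · |ξ|^(1/α)`; it turns `Q_α f(s, u)` into
`∫ F_α(ξ, s ξ + u) dξ`. For `θ = arccot(-s)` one has `sin θ = 1/√(1+s²)` and `cot θ = -s`, so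
parametrising the line of the X-ray transform by its first coordinate `ξ` gives the same integral,
with Jacobian `√(1+s²)`. -/

noncomputable def signedRpow (p x : ℝ) : ℝ := Real.sign x * |x| ^ p

section signedRpow

variable {p x : ℝ}

lemma signedRpow_one (x : ℝ) : signedRpow 1 x = x := by
  rcases lt_trichotomy x 0 with h | rfl | h
  · simp [signedRpow, Real.sign_of_neg h, abs_of_neg h]
  · simp [signedRpow]
  · simp [signedRpow, Real.sign_of_pos h, abs_of_pos h]

lemma signedRpow_zero_right (p : ℝ) : signedRpow p 0 = 0 := by
  simp [signedRpow]

lemma signedRpow_neg (p x : ℝ) : signedRpow p (-x) = -signedRpow p x := by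
  simp [signedRpow, Real.sign_neg]

lemma signedRpow_of_pos (hx : 0 < x) : signedRpow p x = x ^ p := by
  simp [signedRpow, Real.sign_of_pos hx, abs_of_pos hx]

lemma abs_signedRpow (p : ℝ) (hx : x ≠ 0) : |signedRpow p x| = |x| ^ p := by
  rcases Real.sign_apply_eq_of_ne_zero x hx with h | h <;>
    simp [signedRpow, h, abs_of_nonneg (Real.rpow_nonneg (abs_nonneg x) p)]

lemma signedRpow_ne_zero (hx : x ≠ 0) : signedRpow p x ≠ 0 := by
  rw [← abs_ne_zero, abs_signedRpow p hx]
  exact (Real.rpow_pos_of_pos (abs_pos.2 hx) p).ne'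

lemma sign_signedRpow (p x : ℝ) : Real.sign (signedRpow p x) = Real.sign x := by
  rcases lt_trichotomy x 0 with h | rfl | h
  · have : signedRpow p x < 0 := by
      rw [← neg_neg x, signedRpow_neg, signedRpow_of_pos (neg_pos.2 h)]
      exact neg_neg_of_pos (Real.rpow_pos_of_pos (neg_pos.2 h) p)
    rw [Real.sign_of_neg this, Real.sign_of_neg h]
  · simp [signedRpow_zero_right]
  · rw [Real.sign_of_pos h, signedRpow_of_pos h, Real.sign_of_pos (Real.rpow_pos_of_pos h p)]

lemma signedRpow_signedRpow (p q x : ℝ) :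
    signedRpow q (signedRpow p x) = signedRpow (p * q) x := by
  rcases eq_or_ne x 0 with rfl | hx
  · simp only [signedRpow_zero_right]
  · rw [signedRpow, sign_signedRpow, abs_signedRpow p hx, ← Real.rpow_mul (abs_nonneg x),
      signedRpow]

lemma signedRpow_inv_signedRpow (hp : p ≠ 0) (x : ℝ) : signedRpow p⁻¹ (signedRpow p x) = x := by
  rw [signedRpow_signedRpow, mul_inv_cancel₀ hp, signedRpow_one]

lemma signedRpow_signedRpow_inv (hp : p ≠ 0) (x : ℝ) : signedRpow p (signedRpow p⁻¹ x) = x := by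
  rw [signedRpow_signedRpow, inv_mul_cancel₀ hp, signedRpow_one]

lemma mul_abs_rpow_sub_one (p x : ℝ) : x * |x| ^ (p - 1) = signedRpow p x := by
  rcases lt_trichotomy x 0 with h | rfl | h
  · rw [signedRpow, Real.sign_of_neg h, Real.rpow_sub_one (abs_ne_zero.2 h.ne), abs_of_neg h]
    field_simp [h.ne]
  · simp [signedRpow]
  · rw [signedRpow, Real.sign_of_pos h, Real.rpow_sub_one (abs_ne_zero.2 h.ne'), abs_of_pos h]
    field_simp

lemma hasDerivAt_signedRpow_of_pos (hx : 0 < x) :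
    HasDerivAt (signedRpow p) (p * |x| ^ (p - 1)) x := by
  rw [abs_of_pos hx]
  refine (Real.hasDerivAt_rpow_const (Or.inl hx.ne')).congr_of_eventuallyEq ?_
  filter_upwards [Ioi_mem_nhds hx] with y hy using signedRpow_of_pos hy

lemma hasDerivAt_signedRpow_of_neg (hx : x < 0) :
    HasDerivAt (signedRpow p) (p * |x| ^ (p - 1)) x := by
  have h := ((hasDerivAt_signedRpow_of_pos (p := p) (neg_pos.2 hx)).comp x
    (hasDerivAt_neg x)).neg
  have hodd : (-signedRpow p ∘ Neg.neg) = signedRpow p := by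
    funext y
    simp [signedRpow_neg]
  rwa [abs_neg, mul_neg_one, neg_neg, hodd] at h

lemma hasDerivAt_signedRpow_zero (hp : 1 < p) :
    HasDerivAt (signedRpow p) (p * |(0 : ℝ)| ^ (p - 1)) 0 := by
  have hp0 : p - 1 ≠ 0 := by linarith
  rw [hasDerivAt_iff_tendsto_slope_zero, abs_zero, Real.zero_rpow hp0, mul_zero]
  have hcont : ContinuousAt (fun y : ℝ => |y| ^ (p - 1)) 0 :=
    continuous_abs.continuousAt.rpow_const (Or.inr (by linarith))
  have hlim := hcont.tendsto.mono_left (nhdsWithin_le_nhds (s := {0}ᶜ))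
  rw [abs_zero, Real.zero_rpow hp0] at hlim
  refine hlim.congr' ?_
  filter_upwards [self_mem_nhdsWithin] with t ht
  rw [zero_add, signedRpow_zero_right, sub_zero, smul_eq_mul, ← mul_abs_rpow_sub_one,
    inv_mul_cancel_left₀ ht]

lemma hasDerivAt_signedRpow (hp : 1 < p) (x : ℝ) :
    HasDerivAt (signedRpow p) (p * |x| ^ (p - 1)) x := by
  rcases lt_trichotomy x 0 with h | rfl | h
  · exact hasDerivAt_signedRpow_of_neg h
  · exact hasDerivAt_signedRpow_zero hp
  · exact hasDerivAt_signedRpow_of_pos h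

lemma integral_comp_signedRpow {E : Type*} [NormedAddCommGroup E] [NormedSpace ℝ E]
    (hp : 1 < p) (g : ℝ → E) :
    ∫ x, (p * |x| ^ (p - 1)) • g (signedRpow p x) = ∫ ξ, g ξ := by
  have hp0 : p ≠ 0 := by linarith
  have hsurj : Function.Surjective (signedRpow p) := fun ξ =>
    ⟨signedRpow p⁻¹ ξ, signedRpow_signedRpow_inv hp0 ξ⟩
  have hinj : Function.Injective (signedRpow p) :=
    Function.LeftInverse.injective (signedRpow_inv_signedRpow hp0)
  have h := integral_image_eq_integral_abs_deriv_smul MeasurableSet.univ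
    (fun x _ => (hasDerivAt_signedRpow hp x).hasDerivWithinAt) hinj.injOn g
  rw [Set.image_univ, hsurj.range_eq, setIntegral_univ, setIntegral_univ] at h
  rw [h]
  congr 1 with y
  rw [abs_of_nonneg (by positivity : (0 : ℝ) ≤ p * |y| ^ (p - 1))]

end signedRpow

lemma xray_eq_integral_of_sin_ne_zero (g : ℝ → ℝ → ℝ) {θ : ℝ} (hθ : Real.sin θ ≠ 0) (t : ℝ) :
    xray g θ t = |Real.sin θ|⁻¹ * ∫ ξ, g ξ (t / Real.sin θ - ξ * Real.cot θ) := by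
  set h : ℝ → ℝ := fun ξ => g ξ (t / Real.sin θ - ξ * Real.cot θ)
  have hline : ∀ σ, g (t * Real.cos θ - σ * Real.sin θ) (t * Real.sin θ + σ * Real.cos θ) =
      h (-Real.sin θ * σ + t * Real.cos θ) := by
    intro σ
    simp only [h, Real.cot_eq_cos_div_sin]
    congr 1
    · ring
    · field_simp
      linear_combination t * Real.sin_sq_add_cos_sq θ
  rw [xray]
  simp_rw [hline]
  rw [Measure.integral_comp_mul_left (fun y => h (y + t * Real.cos θ)),
    integral_add_right_eq_self h, inv_neg, abs_neg, abs_inv, smul_eq_mul]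

lemma sin_arccotNeg (s : ℝ) : Real.sin (arccotNeg s) = (√(1 + s ^ 2))⁻¹ := by
  rw [arccotNeg, add_comm, Real.sin_add_pi_div_two, Real.cos_arctan, one_div]

lemma cot_arccotNeg (s : ℝ) : Real.cot (arccotNeg s) = -s := by
  rw [arccotNeg, add_comm, Real.cot_eq_cos_div_sin, Real.sin_add_pi_div_two,
    Real.cos_add_pi_div_two, neg_div, ← Real.tan_eq_sin_div_cos, Real.tan_arctan]

theorem Qalpha_eq_xray_general (α c : ℝ) (hα : 1 < α)
    (f : SchwartzMap (ℝ × ℝ) ℝ)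
    (F : ℝ → ℝ → ℝ)
    (hF : ∀ ξ : ℝ, ξ ≠ 0 → ∀ η : ℝ,
      F ξ η = f (Real.sign ξ * |ξ| ^ (1 / α) + c, η) / (α * |ξ| ^ ((α - 1) / α))) :
    ∀ s u : ℝ,
      (∫ x : ℝ, f (x + c, s * x * |x| ^ (α - 1) + u)) =
        (1 / Real.sqrt (1 + s ^ 2)) * xray F (arccotNeg s) (u / Real.sqrt (1 + s ^ 2)) := by
  intro s u
  have hα0 : α ≠ 0 := by linarith
  have hr : 0 < √(1 + s ^ 2) := Real.sqrt_pos.2 (by positivity)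
  have hF_signedRpow : ∀ x ≠ 0, ∀ η,
      (α * |x| ^ (α - 1)) • F (signedRpow α x) η = f (x + c, η) := by
    intro x hx η
    have hpos : 0 < α * |x| ^ (α - 1) := mul_pos (by linarith) (by positivity)
    rw [hF _ (signedRpow_ne_zero hx), one_div, ← signedRpow, signedRpow_inv_signedRpow hα0,
      abs_signedRpow α hx, ← Real.rpow_mul (abs_nonneg x), mul_div_cancel₀ _ hα0, smul_eq_mul,
      mul_div_cancel₀ _ hpos.ne']
  rw [xray_eq_integral_of_sin_ne_zero F (by simpa [sin_arccotNeg] using hr.ne') _, sin_arccotNeg,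
    cot_arccotNeg, abs_inv, abs_of_pos hr, inv_inv, div_inv_eq_mul,
    div_mul_cancel₀ _ hr.ne', one_div, inv_mul_cancel_left₀ hr.ne',
    ← integral_comp_signedRpow hα (fun ξ => F ξ (u - ξ * -s))]
  refine integral_congr_ae ((Measure.ae_ne volume 0).mono fun x hx => ?_)
  dsimp only
  rw [hF_signedRpow x hx, mul_assoc, mul_abs_rpow_sub_one]
  congr 2
  ring

/-- Reduction of `Q_α` to the X-ray transform of `F_α`. -/
theorem Qalpha_eq_xray (α c : ℝ) (hα : 1 < α) (m : ℕ) (hm : (m : ℝ) ≥ α - 2)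
    (f : SchwartzMap (ℝ × ℝ) ℝ)
    (hvan : ∀ k ≤ m, ∀ y : ℝ, iteratedDeriv k (fun x : ℝ => f (x, y)) c = 0)
    (F : ℝ → ℝ → ℝ)
    (hF : ∀ ξ : ℝ, ξ ≠ 0 → ∀ η : ℝ,
      F ξ η = f (Real.sign ξ * |ξ| ^ (1 / α) + c, η) / (α * |ξ| ^ ((α - 1) / α))) :
    ∀ s u : ℝ,
      (∫ x : ℝ, f (x + c, s * x * |x| ^ (α - 1) + u)) =
        (1 / Real.sqrt (1 + s ^ 2)) * xray F (arccotNeg s) (u / Real.sqrt (1 + s ^ 2)) :=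
  Qalpha_eq_xray_general α c hα f F hF
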